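/- If |n| ≠ |m| and |n|, |m| ≥ 2, then BS(n,m) is not isomorphic to BS(n', m') whenever {n,m} ≠ {εn', εm'} for both ε = 1 and ε = -1; in particular BS(2,3) is not isomorphic to BS(2,5). -/

import Mathlib

/-- Relations of the Baumslag–Solitar group `BS(n,m) = ⟨a,b | a bⁿ a⁻¹ = bᵐ⟩`,
with `a` corresponding to `true` and `b` to `false`. -/
def BSRels (n m : ℤ) : Set (FreeGroup Bool) :=
  {FreeGroup.of true * FreeGroup.of false ^ n * (FreeGroup.of true)⁻¹ *
    (FreeGroup.of false ^ m)⁻¹}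

/-- The Baumslag–Solitar group `BS(n,m)`. -/
abbrev BS (n m : ℤ) : Type := PresentedGroup (BSRels n m)

/-- The generator `a` of `BS(n,m)`. -/
def BS.a (n m : ℤ) : BS n m := PresentedGroup.of true

/-- The generator `b` of `BS(n,m)`. -/
def BS.b (n m : ℤ) : BS n m := PresentedGroup.of false


/-!
Homomorphisms from `BS(n,m)` to an abelian group are the pairs `(x, y)` with `y ^ (n - m) = 1`;
counting those into the finite cyclic groups shows that `|n - m|` is an isomorphism invariant.

For the ratio, map `BS(n,m)` to the affine group of `ℚ` by `a ↦ (x ↦ (m/n) x)`,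
`b ↦ (x ↦ x + 1)`: the image is nonabelian and its linear part is the infinite cyclic group
generated by `m/n`. Precompose with an isomorphism `BS(n',m') ≅ BS(n,m)`. The linear part of the
image of `b` is then torsion (by the relation, read in the abelian group `ℚˣ`), hence trivial, so
that image is a translation, nonzero because the image is nonabelian; the relation then says that
the image of `a` has linear part `m'/n'`. This generates the same cyclic group as `m/n`, so
`m'/n' = (m/n)^{±1}`, and together with `|n - m| = |n' - m'|` this gives `{n,m} = ±{n',m'}`.
-/

theorem Nat.eq_of_forall_dvd_iff_of_ne_zero {x y : ℕ} (h : ∀ d ≠ 0, d ∣ x ↔ d ∣ y) :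
    x = y := by
  have hzero {x y : ℕ} (h : ∀ d ≠ 0, d ∣ x ↔ d ∣ y) (hx : x = 0) : y = 0 :=
    Nat.eq_zero_of_dvd_of_lt ((h (y + 1) y.succ_ne_zero).1 (hx ▸ dvd_zero _)) y.lt_succ_self
  refine eq_of_forall_dvd' fun d => ?_
  rcases eq_or_ne d 0 with rfl | hd
  · simpa only [zero_dvd_iff] using ⟨hzero h, hzero fun d hd => (h d hd).symm⟩
  · exact h d hd

theorem eq_one_of_mem_zpowers_of_zpow_eq_one {G : Type*} [Group G] {x y : G}
    (hx : ¬IsOfFinOrder x) (hy : y ∈ Subgroup.zpowers x) {k : ℤ} (hk : k ≠ 0)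
    (h : y ^ k = 1) : y = 1 := by
  obtain ⟨j, rfl⟩ := Subgroup.mem_zpowers_iff.1 hy
  rw [← zpow_mul] at h
  have hj : j * k = 0 := injective_zpow_iff_not_isOfFinOrder.2 hx (h.trans (zpow_zero x).symm)
  simp [(mul_eq_zero.1 hj).resolve_right hk]

theorem Units.not_isOfFinOrder_of_abs_ne_one {R : Type*} [Ring R] [LinearOrder R]
    [IsStrictOrderedRing R] {u : Rˣ} (hu : |(u : R)| ≠ 1) : ¬IsOfFinOrder u := by
  rw [← orderOf_eq_zero_iff, ← orderOf_units]
  exact orderOf_abs_ne_one hu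

theorem Int.exists_sign_pair_eq_of_ratio {n m n' m' : ℤ} (hne' : n' ≠ m')
    (habs : (n - m).natAbs = (n' - m').natAbs) (hratio : m * n' = m' * n ∨ n * n' = m' * m) :
    ∃ ε : ℤ, (ε = 1 ∨ ε = -1) ∧ ({n, m} : Set ℤ) = {ε * n', ε * m'} := by
  have hd : n' - m' ≠ 0 := sub_ne_zero.2 hne'
  rcases Int.natAbs_eq_natAbs_iff.1 habs with hs | hs <;> rcases hratio with hr | hr
  · have hn : n = n' := mul_left_cancel₀ hd (by linear_combination hr + n' * hs)
    exact ⟨1, .inl rfl, by rw [hn, show m = m' by linarith, one_mul, one_mul]⟩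
  · have hn : n = -m' := mul_left_cancel₀ hd (by linear_combination hr - m' * hs)
    exact ⟨-1, .inr rfl, by rw [hn, show m = -n' by linarith, Set.pair_comm]; simp⟩
  · have hn : n = -n' := mul_left_cancel₀ hd (by linear_combination hr + n' * hs)
    exact ⟨-1, .inr rfl, by rw [hn, show m = -m' by linarith]; simp⟩
  · have hn : n = m' := mul_left_cancel₀ hd (by linear_combination hr - m' * hs)
    exact ⟨1, .inl rfl, by rw [hn, show m = n' by linarith, Set.pair_comm, one_mul, one_mul]⟩

namespace BS

variable {n m n' m' : ℤ}

theorem rel (n m : ℤ) : a n m * b n m ^ n * (a n m)⁻¹ = b n m ^ m := by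
  have h : PresentedGroup.mk (BSRels n m) (FreeGroup.of true * FreeGroup.of false ^ n *
      (FreeGroup.of true)⁻¹ * (FreeGroup.of false ^ m)⁻¹) = 1 :=
    (QuotientGroup.eq_one_iff _).2 (Subgroup.subset_normalClosure rfl)
  rw [← mul_inv_eq_one]
  simpa [a, b, PresentedGroup.of] using h

section lift

variable {G : Type*} [Group G]

def lift (A B : G) (h : A * B ^ n * A⁻¹ = B ^ m) : BS n m →* G :=
  PresentedGroup.toGroup (f := fun x => if x then A else B)
    (by rintro r rfl; simp [h])

@[simp] theorem lift_a (A B : G) (h : A * B ^ n * A⁻¹ = B ^ m) : lift A B h (a n m) = A :=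
  PresentedGroup.toGroup.of _

@[simp] theorem lift_b (A B : G) (h : A * B ^ n * A⁻¹ = B ^ m) : lift A B h (b n m) = B :=
  PresentedGroup.toGroup.of _

@[ext] theorem hom_ext {f g : BS n m →* G} (ha : f (a n m) = g (a n m))
    (hb : f (b n m) = g (b n m)) : f = g :=
  PresentedGroup.ext fun x => by cases x <;> assumption

theorem map_rel (f : BS n m →* G) :
    f (a n m) * f (b n m) ^ n * (f (a n m))⁻¹ = f (b n m) ^ m := by
  simpa using congrArg f (rel n m)

theorem range_eq_closure (f : BS n m →* G) :
    f.range = Subgroup.closure {f (a n m), f (b n m)} := by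
  have hgen : Set.range (PresentedGroup.of : Bool → BS n m) = {a n m, b n m} := by
    ext x; simp [a, b, or_comm]
  rw [MonoidHom.range_eq_map, ← PresentedGroup.closure_range_of, hgen, MonoidHom.map_closure,
    Set.image_pair]

theorem range_eq_zpowers_of_map_b_eq_one (f : BS n m →* G) (hb : f (b n m) = 1) :
    f.range = Subgroup.zpowers (f (a n m)) := by
  rw [range_eq_closure, hb, Set.pair_comm, Subgroup.closure_insert_one, Subgroup.zpowers_eq_closure]

theorem commute_of_map_b_eq_one (f : BS n m →* G) (hb : f (b n m) = 1)
    {x y : G} (hx : x ∈ f.range) (hy : y ∈ f.range) : Commute x y := by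
  rw [range_eq_zpowers_of_map_b_eq_one f hb, Subgroup.mem_zpowers_iff] at hx hy
  obtain ⟨i, rfl⟩ := hx
  obtain ⟨j, rfl⟩ := hy
  exact Commute.zpow_zpow_self _ i j

end lift

section abelian

variable {A : Type*} [CommGroup A]

theorem comm_rel_iff (x y : A) : x * y ^ n * x⁻¹ = y ^ m ↔ y ^ (n - m) = 1 := by
  rw [mul_inv_cancel_comm, zpow_sub, mul_inv_eq_one]

theorem map_b_zpow_sub_eq_one (f : BS n m →* A) : f (b n m) ^ (n - m) = 1 :=
  (comm_rel_iff _ _).1 (map_rel f)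

def homEquivOfCommGroup (n m : ℤ) (A : Type*) [CommGroup A] :
    (BS n m →* A) ≃ A × {y : A // y ^ (n - m) = 1} where
  toFun f := (f (a n m), ⟨f (b n m), map_b_zpow_sub_eq_one f⟩)
  invFun p := lift p.1 p.2.1 ((comm_rel_iff _ _).2 p.2.2)
  left_inv f := by ext <;> simp
  right_inv p := by simp

theorem forall_zpow_sub_eq_one_iff (e : BS n m ≃* BS n' m') [Finite A] :
    (∀ y : A, y ^ (n - m) = 1) ↔ ∀ y : A, y ^ (n' - m') = 1 := by
  have hcard : Nat.card {y : A // y ^ (n - m) = 1} = Nat.card {y : A // y ^ (n' - m') = 1} := by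
    have := Nat.card_congr (((homEquivOfCommGroup n m A).symm.trans
      e.monoidHomCongrLeftEquiv).trans (homEquivOfCommGroup n' m' A))
    rwa [Nat.card_prod, Nat.card_prod, Nat.mul_right_inj Nat.card_pos.ne'] at this
  have hall (P : A → Prop) : (∀ y, P y) ↔ Nat.card {y // P y} = Nat.card A :=
    ⟨fun h => Nat.card_congr (Equiv.subtypeUnivEquiv h),
      fun h y => by_contra fun hy => (Finite.card_subtype_lt hy).ne h⟩
  rw [hall, hall, hcard]

end abelian

theorem natAbs_sub_eq_of_mulEquiv (e : BS n m ≃* BS n' m') :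
    (n - m).natAbs = (n' - m').natAbs := by
  refine Nat.eq_of_forall_dvd_iff_of_ne_zero fun d hd => ?_
  have : NeZero d := ⟨hd⟩
  have hexp : Monoid.exponent (Multiplicative (ZMod d)) = d := by
    rw [Monoid.exponent_multiplicative, ZMod.exponent]
  simpa only [← Group.exponent_dvd_iff_forall_zpow_eq_one, hexp, Int.natCast_dvd] using
    forall_zpow_sub_eq_one_iff (A := Multiplicative (ZMod d)) e

end BS

open SemidirectProduct

def unitsMulAut : ℚˣ →* MulAut (Multiplicative ℚ) :=
  (MulAutMultiplicative ℚ).symm.toMonoidHom.comp (DistribMulAction.toAddAut ℚˣ ℚ)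

@[simp] theorem unitsMulAut_apply (u : ℚˣ) (x : Multiplicative ℚ) :
    unitsMulAut u x = Multiplicative.ofAdd (u * x.toAdd) := rfl

@[simp] theorem unitsMulAut_symm_apply (u : ℚˣ) (x : Multiplicative ℚ) :
    (unitsMulAut u).symm x = Multiplicative.ofAdd (↑u⁻¹ * x.toAdd) := by
  rw [MulEquiv.symm_apply_eq]; simp

/-- `inl (ofAdd t)` is the translation `x ↦ x + t` and `inr u` the dilation `x ↦ u x`. -/
abbrev RatAff : Type := Multiplicative ℚ ⋊[unitsMulAut] ℚˣ

namespace RatAff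

def translation (t : ℚ) : RatAff := inl (Multiplicative.ofAdd t)

def scale : RatAff →* ℚˣ := rightHom

theorem translation_injective : Function.Injective translation := fun s t h => by
  simpa [translation] using congrArg (fun x : RatAff => x.left.toAdd) h

@[simp] theorem translation_zero : translation 0 = 1 := by simp [translation]

@[simp] theorem scale_translation (t : ℚ) : scale (translation t) = 1 := by
  simp [scale, translation]

@[simp] theorem scale_inr (u : ℚˣ) : scale (inr u) = u := by simp [scale]

theorem translation_zpow (t : ℚ) (k : ℤ) : translation t ^ k = translation (k * t) := by
  rw [translation, ← map_zpow, ← ofAdd_zsmul, zsmul_eq_mul]; rfl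

theorem conj_translation (x : RatAff) (t : ℚ) :
    x * translation t * x⁻¹ = translation (scale x * t) := by
  ext <;> simp [translation, scale]

theorem eq_translation_of_scale_eq_one {x : RatAff} (hx : scale x = 1) :
    x = translation x.left.toAdd := by
  ext
  · simp [translation]
  · simpa [translation, scale] using hx

end RatAff

namespace BS

open RatAff

variable {n m n' m' : ℤ}

theorem scale_map_a_mul_eq (f : BS n m →* RatAff) (hb1 : scale (f (b n m)) = 1)
    (hb : f (b n m) ≠ 1) : (scale (f (a n m)) : ℚ) * n = m := by
  set t := (f (b n m)).left.toAdd
  have hB : f (b n m) = translation t := eq_translation_of_scale_eq_one hb1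
  have ht : t ≠ 0 := fun h => hb (by rw [hB, h, translation_zero])
  have hrel := map_rel f
  rw [hB, translation_zpow, translation_zpow, conj_translation] at hrel
  exact mul_right_cancel₀ ht (by linear_combination translation_injective hrel)

def toRatAff (u : ℚˣ) (hu : (u : ℚ) * n = m) : BS n m →* RatAff :=
  lift (inr u) (translation 1) (by rw [translation_zpow, translation_zpow, conj_translation,
    scale_inr, ← hu, mul_one, mul_one])

variable {u : ℚˣ} {hu : (u : ℚ) * n = m}

@[simp] theorem toRatAff_a : toRatAff u hu (a n m) = inr u := lift_a ..

@[simp] theorem toRatAff_b : toRatAff u hu (b n m) = translation 1 := lift_b ..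

theorem scale_range_toRatAff : (scale.comp (toRatAff u hu)).range = Subgroup.zpowers u := by
  rw [range_eq_zpowers_of_map_b_eq_one] <;> simp

theorem not_commute_toRatAff (hu1 : u ≠ 1) :
    ¬Commute (toRatAff u hu (a n m)) (toRatAff u hu (b n m)) := by
  intro h
  have hconj := conj_translation (inr u) 1
  rw [toRatAff_a, toRatAff_b] at h
  rw [h.eq, mul_inv_cancel_right, scale_inr, mul_one] at hconj
  exact hu1 (Units.ext (translation_injective hconj).symm)

theorem ratio_eq_or_inv_of_mulEquiv (e : BS n m ≃* BS n' m') (hn : n ≠ 0) (hm : m ≠ 0)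
    (hnm : |n| ≠ |m|) (hne' : n' ≠ m') : m * n' = m' * n ∨ n * n' = m' * m := by
  have hnq : (n : ℚ) ≠ 0 := by exact_mod_cast hn
  set u : ℚˣ := Units.mk0 (m / n) (div_ne_zero (by exact_mod_cast hm) hnq)
  have hu : (u : ℚ) * n = m := div_mul_cancel₀ _ hnq
  have hu_abs : |(u : ℚ)| ≠ 1 := by
    rw [Units.val_mk0, abs_div, ne_eq, div_eq_one_iff_eq (abs_ne_zero.2 hnq)]
    exact_mod_cast hnm.symm
  have hu_inf := Units.not_isOfFinOrder_of_abs_ne_one hu_abs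
  have hu1 : u ≠ 1 := fun h => hu_abs (by simp [h])
  set ψ := toRatAff u hu
  set ψ' := ψ.comp e.symm.toMonoidHom
  have hrange : ψ'.range = ψ.range := by
    rw [MonoidHom.range_comp, MonoidHom.range_eq_top.2 e.symm.surjective,
      ← MonoidHom.range_eq_map]
  have hscale : (scale.comp ψ').range = Subgroup.zpowers u := by
    rw [MonoidHom.range_comp, hrange, ← MonoidHom.range_comp, scale_range_toRatAff]
  have hb1 : scale (ψ' (b n' m')) = 1 :=
    eq_one_of_mem_zpowers_of_zpow_eq_one hu_inf (hscale ▸ ⟨_, rfl⟩)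
      (sub_ne_zero.2 hne') (map_b_zpow_sub_eq_one (scale.comp ψ'))
  have hb : ψ' (b n' m') ≠ 1 := fun h => not_commute_toRatAff hu1 <|
    commute_of_map_b_eq_one ψ' h (x := ψ (a n m)) (y := ψ (b n m)) (hrange ▸ ⟨a n m, rfl⟩)
      (hrange ▸ ⟨b n m, rfl⟩)
  have hratio := scale_map_a_mul_eq ψ' hb1 hb
  have hzp : Subgroup.zpowers u = Subgroup.zpowers (scale (ψ' (a n' m'))) := by
    rw [← hscale, range_eq_zpowers_of_map_b_eq_one _ hb1]; rfl
  rcases (Subgroup.zpowers_eq_zpowers_iff hu_inf).1 hzp with h | h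
  · left
    rw [← h] at hratio
    exact_mod_cast (by linear_combination (n : ℚ) * hratio - n' * hu : (m : ℚ) * n' = m' * n)
  · right
    rw [← h] at hratio
    have hinv : (↑u⁻¹ : ℚ) * u = 1 := by simp
    exact_mod_cast (by linear_combination (↑u⁻¹ * n' : ℚ) * hu + m * hratio - n * n' * hinv :
      (n : ℚ) * n' = m' * m)

end BS

theorem bs_not_isomorphic_general (n m n' m' : ℤ) (hn : 2 ≤ |n|) (hm : 2 ≤ |m|) (hnm : |n| ≠ |m|)
    (h : ∀ ε : ℤ, ε = 1 ∨ ε = -1 → ({n, m} : Set ℤ) ≠ {ε * n', ε * m'}) :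
    IsEmpty (BS n m ≃* BS n' m') ∧ IsEmpty (BS 2 3 ≃* BS 2 5) := by
  refine ⟨⟨fun e => ?_⟩, ⟨fun e => ?_⟩⟩
  · have habs := BS.natAbs_sub_eq_of_mulEquiv e
    have hne' : n' ≠ m' := fun h' => hnm (by
      rw [h', sub_self, Int.natAbs_zero, Int.natAbs_eq_zero, sub_eq_zero] at habs; rw [habs])
    have hratio := BS.ratio_eq_or_inv_of_mulEquiv e (abs_pos.1 (by linarith))
      (abs_pos.1 (by linarith)) hnm hne'
    obtain ⟨ε, hε, hpair⟩ := Int.exists_sign_pair_eq_of_ratio hne' habs hratio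
    exact h ε hε hpair
  · have := BS.natAbs_sub_eq_of_mulEquiv e
    norm_num at this

/-- If `|n|,|m| ≥ 2`, `|n| ≠ |m|`, and `{n,m} ≠ {εn',εm'}` for both `ε = ±1`, then
`BS(n,m) ≇ BS(n',m')`; in particular `BS(2,3) ≇ BS(2,5)`. -/
theorem bs_not_isomorphic (n m n' m' : ℤ) (hn : 2 ≤ |n|) (hm : 2 ≤ |m|) (hnm : |n| ≠ |m|)
    (hn' : n' ≠ 0) (hm' : m' ≠ 0)
    (h : ∀ ε : ℤ, ε = 1 ∨ ε = -1 → ({n, m} : Set ℤ) ≠ {ε * n', ε * m'}) :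
    IsEmpty (BS n m ≃* BS n' m') ∧ IsEmpty (BS 2 3 ≃* BS 2 5) :=
  bs_not_isomorphic_general n m n' m' hn hm hnm h
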